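/- Let θ*, θ ∈ S^{d−1}, let z = xᵀθ* and z' = xᵀθ for x a d-dimensional standard normal vector, and let p : ℝ → [0,1] satisfy p(−t) = 1 − p(t). With y satisfying P(y = 1 | x) = p(xᵀθ*), for every integer q ≥ 2 the following pointwise bound holds almost surely: |[−y xᵀθ]_+ − [−y xᵀθ*]_+|^q ≤ 2^{q−1}·1{sign(xᵀθ) ≠ sign(xᵀθ*)}·|xᵀθ|^q + 2^{q−1}·1{y ≠ sign(xᵀθ*)}·|xᵀ(θ − θ*)|^q. -/

import Mathlib

open MeasureTheory ProbabilityTheory Real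

noncomputable def stdGaussian (d : ℕ) : Measure (EuclideanSpace ℝ (Fin d)) :=
  (Measure.pi fun _ : Fin d => gaussianReal 0 1).map (EuclideanSpace.equiv (Fin d) ℝ).symm

/-- Binary response model: `x` is a standard Gaussian vector and, conditionally on
`x`, the label `y ∈ {-1,1}` satisfies `P(y = 1 | x) = p(xᵀθ)`. -/
noncomputable def binaryModel (d : ℕ) (p : ℝ → ℝ) (θ : EuclideanSpace ℝ (Fin d)) :
    Measure (EuclideanSpace ℝ (Fin d) × ℝ) :=
  (stdGaussian d).bind fun x =>
    ENNReal.ofReal (p (inner ℝ x θ : ℝ)) • Measure.dirac (x, (1:ℝ))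
      + ENNReal.ofReal (1 - p (inner ℝ x θ : ℝ)) • Measure.dirac (x, (-1:ℝ))

/-- `sign(t) = 1` if `t > 0` and `-1` otherwise. -/
noncomputable def sgn (t : ℝ) : ℝ := if 0 < t then 1 else -1

/-! Since `max (-y t) 0` vanishes at `y = sgn t` and is `1`-Lipschitz in `t` and bounded by `|t|`
when `|y| = 1`, the loss difference is at most `1{sgn a ≠ sgn b} |a| + 1{y ≠ sgn b} |a - b|`;
the `q`-th power of a sum of two terms is at most `2^(q-1)` times the sum of their `q`-th powers. -/

lemma sgn_mul_self (t : ℝ) : sgn t * t = |t| := by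
  unfold sgn
  split_ifs with ht
  · rw [one_mul, abs_of_pos ht]
  · rw [neg_one_mul, abs_of_nonpos (not_lt.mp ht)]

lemma max_neg_sgn_mul_self_eq_zero (t : ℝ) : max (-sgn t * t) 0 = 0 :=
  max_eq_right <| by rw [neg_mul, sgn_mul_self]; exact neg_nonpos.mpr (abs_nonneg t)

lemma abs_max_neg_mul_zero_le {y : ℝ} (hy : |y| = 1) (a : ℝ) : |max (-y * a) 0| ≤ |a| := by
  rw [abs_of_nonneg (le_max_right _ _)]
  refine max_le ?_ (abs_nonneg a)
  calc -y * a ≤ |-y * a| := le_abs_self _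
    _ = |a| := by rw [abs_mul, abs_neg, hy, one_mul]

lemma abs_max_neg_mul_zero_sub_le {y : ℝ} (hy : |y| = 1) (a b : ℝ) :
    |max (-y * a) 0 - max (-y * b) 0| ≤ |a - b| :=
  calc |max (-y * a) 0 - max (-y * b) 0| ≤ |-y * a - -y * b| := abs_max_sub_max_le_abs _ _ _
    _ = |a - b| := by rw [← mul_sub, abs_mul, abs_neg, hy, one_mul]

lemma abs_max_neg_mul_zero_sub_le_ite {y : ℝ} (hy : |y| = 1) (a b : ℝ) :
    |max (-y * a) 0 - max (-y * b) 0| ≤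
      (if sgn a ≠ sgn b then 1 else 0) * |a| + (if y ≠ sgn b then 1 else 0) * |a - b| := by
  by_cases hyb : y = sgn b
  · rw [hyb, max_neg_sgn_mul_self_eq_zero, sub_zero, if_neg (not_not.mpr rfl), zero_mul, add_zero]
    by_cases hab : sgn a = sgn b
    · rw [← hab, max_neg_sgn_mul_self_eq_zero, abs_zero, if_neg (not_not.mpr rfl), zero_mul]
    · rw [if_pos hab, one_mul, ← hyb]
      exact abs_max_neg_mul_zero_le hy a
  · rw [if_pos hyb, one_mul]
    refine (abs_max_neg_mul_zero_sub_le hy a b).trans (le_add_of_nonneg_left ?_)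
    split_ifs <;> positivity

lemma ite_one_zero_mul_pow (P : Prop) [Decidable P] (c : ℝ) {q : ℕ} (hq : q ≠ 0) :
    ((if P then 1 else 0) * c) ^ q = (if P then 1 else 0) * c ^ q := by
  split_ifs <;> simp [zero_pow hq]

lemma abs_max_neg_mul_zero_sub_pow_le {y : ℝ} (hy : |y| = 1) (a b : ℝ) {q : ℕ} (hq : q ≠ 0) :
    |max (-y * a) 0 - max (-y * b) 0| ^ q ≤
      2 ^ (q - 1) * (if sgn a ≠ sgn b then (1:ℝ) else 0) * |a| ^ q
        + 2 ^ (q - 1) * (if y ≠ sgn b then (1:ℝ) else 0) * |a - b| ^ q := by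
  have hsum := add_pow_le (a := (if sgn a ≠ sgn b then (1:ℝ) else 0) * |a|)
    (b := (if y ≠ sgn b then (1:ℝ) else 0) * |a - b|) (by positivity) (by positivity) q
  rw [ite_one_zero_mul_pow _ _ hq, ite_one_zero_mul_pow _ _ hq] at hsum
  calc _ ≤ _ := pow_le_pow_left₀ (abs_nonneg _) (abs_max_neg_mul_zero_sub_le_ite hy a b) q
    _ ≤ _ := hsum
    _ = _ := by ring

lemma binaryModel_ae_abs_snd_eq_one (d : ℕ) (p : ℝ → ℝ) (θ : EuclideanSpace ℝ (Fin d)) :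
    ∀ᵐ w ∂(binaryModel d p θ), |w.2| = 1 := by
  have hs : MeasurableSet {w : EuclideanSpace ℝ (Fin d) × ℝ | ¬|w.2| = 1} :=
    (measurableSet_eq_fun (measurable_snd.abs) measurable_const).compl
  rw [ae_iff]
  refine nonpos_iff_eq_zero.mp ((Measure.bind_apply_le _ hs).trans_eq ?_)
  simp [Measure.dirac_apply' _ hs]

theorem stmt18_general (d : ℕ) (θstar θ : EuclideanSpace ℝ (Fin d))
    (p : ℝ → ℝ) (q : ℕ) (hq : 2 ≤ q) :
    ∀ᵐ w ∂(binaryModel d p θstar),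
      |max (-w.2 * (inner ℝ w.1 θ : ℝ)) 0 - max (-w.2 * (inner ℝ w.1 θstar : ℝ)) 0| ^ q
        ≤ 2 ^ (q - 1) * (if sgn (inner ℝ w.1 θ : ℝ) ≠ sgn (inner ℝ w.1 θstar : ℝ)
              then (1:ℝ) else 0) * |(inner ℝ w.1 θ : ℝ)| ^ q
          + 2 ^ (q - 1) * (if w.2 ≠ sgn (inner ℝ w.1 θstar : ℝ) then (1:ℝ) else 0)
              * |(inner ℝ w.1 (θ - θstar) : ℝ)| ^ q := by
  filter_upwards [binaryModel_ae_abs_snd_eq_one d p θstar] with w hw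
  rw [inner_sub_right]
  exact abs_max_neg_mul_zero_sub_pow_le hw _ _ (by omega)

/-- Pointwise decomposition bound for the ReLU loss differences (used in the moment
bounds), holding almost surely under the model. -/
theorem stmt18 (d : ℕ) (θstar θ : EuclideanSpace ℝ (Fin d))
    (hθstar : ‖θstar‖ = 1) (hθ : ‖θ‖ = 1)
    (p : ℝ → ℝ) (hp : Measurable p) (hp01 : ∀ t, p t ∈ Set.Icc (0:ℝ) 1)
    (hsym : ∀ t, p (-t) = 1 - p t) (q : ℕ) (hq : 2 ≤ q) :
    ∀ᵐ w ∂(binaryModel d p θstar),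
      |max (-w.2 * (inner ℝ w.1 θ : ℝ)) 0 - max (-w.2 * (inner ℝ w.1 θstar : ℝ)) 0| ^ q
        ≤ 2 ^ (q - 1) * (if sgn (inner ℝ w.1 θ : ℝ) ≠ sgn (inner ℝ w.1 θstar : ℝ)
              then (1:ℝ) else 0) * |(inner ℝ w.1 θ : ℝ)| ^ q
          + 2 ^ (q - 1) * (if w.2 ≠ sgn (inner ℝ w.1 θstar : ℝ) then (1:ℝ) else 0)
              * |(inner ℝ w.1 (θ - θstar) : ℝ)| ^ q :=
  stmt18_general d θstar θ p q hq
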